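/- Let $m_1, m_2 \ge 3$ be integers and $m = m_1 + m_2$. Then $\frac{m_1 + 2\sqrt{m_1 - 1}}{2m} \le \frac{m_1 m_2 - m_2 + m_1}{2 m_1 m_2} \le \frac{2m_1 + m_2 - 2\sqrt{m_2 - 1}}{2m}$. -/

import Mathlib

/-! Both inequalities reduce, after clearing denominators, to the AM-GM inequality
`2 · a · (b √(a - 1)) ≤ a² + (a - 1) b²`; the upper bound is the lower bound for the second factor,
since `1 - r₁²` is the corresponding quantity with `m₁` and `m₂` exchanged. -/

theorem two_mul_mul_sqrt_le (a b : ℝ) {x : ℝ} (hx : 0 ≤ x) :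
    2 * a * b * √x ≤ a ^ 2 + x * b ^ 2 := by
  have h := two_mul_le_add_sq a (b * √x)
  rwa [mul_pow, Real.sq_sqrt hx, ← mul_assoc, mul_comm (b ^ 2)] at h

theorem add_two_mul_sqrt_sub_one_div_le (a b : ℝ) (ha : 1 ≤ a) (hb : 0 < b) :
    (a + 2 * √(a - 1)) / (2 * (a + b)) ≤ (a * b - b + a) / (2 * a * b) := by
  rw [div_le_div_iff₀ (by positivity) (by positivity)]
  linear_combination 2 * two_mul_mul_sqrt_le a b (x := a - 1) (by linarith)

theorem le_sub_two_mul_sqrt_sub_one_div (a b : ℝ) (ha : 0 < a) (hb : 1 ≤ b) :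
    (a * b - b + a) / (2 * a * b) ≤ (2 * a + b - 2 * √(b - 1)) / (2 * (a + b)) := by
  have h := add_two_mul_sqrt_sub_one_div_le b a hb ha
  have hl : (a * b - b + a) / (2 * a * b) = 1 - (b * a - a + b) / (2 * b * a) := by
    field_simp; ring
  have hr :
      (2 * a + b - 2 * √(b - 1)) / (2 * (a + b)) = 1 - (b + 2 * √(b - 1)) / (2 * (b + a)) := by
    field_simp; ring
  rw [hl, hr]
  linarith

theorem r1_sq_case3_in_range (m1 m2 : ℕ) (hm1 : 3 ≤ m1) (hm2 : 3 ≤ m2) :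
    ((m1 : ℝ) + 2 * Real.sqrt ((m1 : ℝ) - 1)) / (2 * ((m1 : ℝ) + m2)) ≤
      ((m1 : ℝ) * m2 - m2 + m1) / (2 * (m1 : ℝ) * m2) ∧
    ((m1 : ℝ) * m2 - m2 + m1) / (2 * (m1 : ℝ) * m2) ≤
      (2 * (m1 : ℝ) + m2 - 2 * Real.sqrt ((m2 : ℝ) - 1)) / (2 * ((m1 : ℝ) + m2)) := by
  have h1 : (3 : ℝ) ≤ m1 := by exact_mod_cast hm1
  have h2 : (3 : ℝ) ≤ m2 := by exact_mod_cast hm2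
  exact ⟨add_two_mul_sqrt_sub_one_div_le _ _ (by linarith) (by linarith),
    le_sub_two_mul_sqrt_sub_one_div _ _ (by linarith) (by linarith)⟩
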